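/- Let A₁, …, Aₙ be positive (self-adjoint, nonnegative) bounded linear operators on a complex Hilbert space H. Then ‖∑_{k=1}^n A_k‖ ≤ ‖M‖, where M is the real n×n matrix with entries M_{jk} = ‖A_j A_k‖^{1/2}, ‖M‖ is its operator norm on Euclidean n-space, and ‖·‖ on operators is the operator norm. -/

import Mathlib

/-!
Put `B k = √(A k)` and, for a vector `x`, `w k = ‖B k x‖`. Then
`‖∑ A k x‖² = ∑ j k, ⟪A j x, A k x⟫ = ∑ j k, ⟪B j x, B j B k (B k x)⟫ ≤ ∑ j k, w j ‖B j B k‖ w k`.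
Since `‖B j B k‖² = ‖B k A j B k‖` is the spectral radius of `A j A k`, it is at most
`M j k`, so the sum is at most `⟪w, M w⟫ ≤ ‖M‖ ‖w‖²`. Finally
`‖w‖² = ⟪∑ A k x, x⟫ ≤ ‖∑ A k x‖ ‖x‖`, and dividing by `‖∑ A k x‖` gives `‖∑ A k x‖ ≤ ‖M‖ ‖x‖`.
-/

open Matrix
open scoped InnerProductSpace ENNReal

theorem spectralRadius_mul_comm {𝕜 A : Type*} [NormedField 𝕜] [Ring A] [Algebra 𝕜 A]
    (a b : A) : spectralRadius 𝕜 (a * b) = spectralRadius 𝕜 (b * a) := by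
  have h (a b : A) : spectralRadius 𝕜 (a * b) ≤ spectralRadius 𝕜 (b * a) := by
    refine iSup₂_le fun k hk => ?_
    rcases eq_or_ne k 0 with rfl | hk₀
    · simp
    · have : k ∈ spectrum 𝕜 (b * a) \ {0} :=
        spectrum.nonzero_mul_comm (𝕜 := 𝕜) a b ▸ ⟨hk, hk₀⟩
      exact le_iSup₂ (f := fun k (_ : k ∈ spectrum 𝕜 (b * a)) => (‖k‖₊ : ℝ≥0∞)) k this.1
  exact (h a b).antisymm (h b a)

theorem CFC.norm_sqrt_mul_sqrt_le {A : Type*} [CStarAlgebra A] [PartialOrder A]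
    [StarOrderedRing A] {a b : A} (ha : 0 ≤ a) (hb : 0 ≤ b) :
    ‖CFC.sqrt a * CFC.sqrt b‖ ≤ √‖a * b‖ := by
  nontriviality A
  set x := CFC.sqrt a * CFC.sqrt b
  have hx : star x * x = CFC.sqrt b * (a * CFC.sqrt b) := by
    simp only [x, star_mul, (CFC.sqrt_nonneg a).isSelfAdjoint.star_eq,
      (CFC.sqrt_nonneg b).isSelfAdjoint.star_eq, mul_assoc]
    rw [← mul_assoc (CFC.sqrt a), CFC.sqrt_mul_sqrt_self a ha]
  have : ‖x‖₊ ^ 2 ≤ ‖a * b‖₊ := by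
    rw [sq, ← CStarRing.nnnorm_star_mul_self, ← ENNReal.coe_le_coe,
      ← (IsSelfAdjoint.star_mul_self x).spectralRadius_eq_nnnorm, hx, spectralRadius_mul_comm,
      mul_assoc, CFC.sqrt_mul_sqrt_self b hb]
    exact spectrum.spectralRadius_le_nnnorm _
  exact Real.le_sqrt_of_sq_le (mod_cast this)

namespace Matrix

theorem dotProduct_mulVec_le_norm_toEuclideanCLM {n : Type*} [Fintype n] [DecidableEq n]
    (M : Matrix n n ℝ) (x : EuclideanSpace ℝ n) :
    x ⬝ᵥ M *ᵥ x ≤ ‖toEuclideanCLM (𝕜 := ℝ) M‖ * ‖x‖ ^ 2 := by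
  rw [← inner_toEuclideanCLM, sq, ← mul_assoc]
  exact (real_inner_le_norm _ _).trans <| by
    rw [mul_comm]; gcongr; exact (toEuclideanCLM (𝕜 := ℝ) M).le_opNorm x

end Matrix

namespace ContinuousLinearMap

variable {H : Type*} [NormedAddCommGroup H] [InnerProductSpace ℂ H] [CompleteSpace H]
  {S T : H →L[ℂ] H}

theorem norm_sqrt_apply_sq (hT : 0 ≤ T) (x : H) : ‖CFC.sqrt T x‖ ^ 2 = RCLike.re ⟪T x, x⟫_ℂ := by
  rw [apply_norm_sq_eq_inner_adjoint_left, ← star_eq_adjoint,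
    (CFC.sqrt_nonneg T).isSelfAdjoint.star_eq, ← mul_def, CFC.sqrt_mul_sqrt_self T hT]

theorem re_inner_apply_le (hS : 0 ≤ S) (hT : 0 ≤ T) (x : H) :
    RCLike.re ⟪S x, T x⟫_ℂ ≤ ‖CFC.sqrt S x‖ * (‖CFC.sqrt S * CFC.sqrt T‖ * ‖CFC.sqrt T x‖) := by
  have : ⟪S x, T x⟫_ℂ = ⟪CFC.sqrt S x, (CFC.sqrt S * CFC.sqrt T) (CFC.sqrt T x)⟫_ℂ := by
    conv_lhs => rw [← CFC.sqrt_mul_sqrt_self S hS, ← CFC.sqrt_mul_sqrt_self T hT]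
    exact (CFC.sqrt_nonneg S).isSelfAdjoint.isSymmetric _ _
  rw [this]
  exact (re_inner_le_norm _ _).trans <| by gcongr; exact le_opNorm _ _

end ContinuousLinearMap

theorem norm_sum_le_norm_matrix {H : Type*} [NormedAddCommGroup H] [InnerProductSpace ℂ H]
    [CompleteSpace H] {n : ℕ} (A : Fin n → (H →L[ℂ] H)) (hA : ∀ k, (A k).IsPositive)
    (M : Matrix (Fin n) (Fin n) ℝ) (hM : ∀ j k, M j k = Real.sqrt ‖A j * A k‖) :
    ‖∑ k, A k‖ ≤ ‖Matrix.toEuclideanCLM (𝕜 := ℝ) M‖ := by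
  have hA₀ k : 0 ≤ A k := (ContinuousLinearMap.nonneg_iff_isPositive _).2 (hA k)
  set S := ∑ k, A k
  set C := ‖Matrix.toEuclideanCLM (𝕜 := ℝ) M‖
  refine ContinuousLinearMap.opNorm_le_bound _ (norm_nonneg _) fun x => ?_
  let w : EuclideanSpace ℝ (Fin n) := WithLp.toLp 2 fun k => ‖CFC.sqrt (A k) x‖
  have hS : ‖S x‖ ^ 2 ≤ w ⬝ᵥ M *ᵥ w := calc
    ‖S x‖ ^ 2 = ∑ j, ∑ k, RCLike.re ⟪A j x, A k x⟫_ℂ := by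
      simp_rw [← inner_self_eq_norm_sq (𝕜 := ℂ), S, _root_.sum_apply, sum_inner,
        inner_sum, map_sum]
    _ ≤ ∑ j, ∑ k, w j * (M j k * w k) := by
      gcongr with j _ k _
      refine (ContinuousLinearMap.re_inner_apply_le (hA₀ j) (hA₀ k) x).trans ?_
      gcongr
      exact hM j k ▸ CFC.norm_sqrt_mul_sqrt_le (hA₀ j) (hA₀ k)
    _ = w ⬝ᵥ M *ᵥ w := by simp [dotProduct, mulVec, Finset.mul_sum]
  have hw : ‖w‖ ^ 2 ≤ ‖S x‖ * ‖x‖ := calc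
    ‖w‖ ^ 2 = ∑ k, ‖CFC.sqrt (A k) x‖ ^ 2 := by simp [EuclideanSpace.norm_sq_eq, w]
    _ = RCLike.re ⟪S x, x⟫_ℂ := by
      simp [S, ContinuousLinearMap.norm_sqrt_apply_sq (hA₀ _)]
    _ ≤ ‖S x‖ * ‖x‖ := re_inner_le_norm _ _
  have hSx : ‖S x‖ ^ 2 ≤ C * (‖S x‖ * ‖x‖) :=
    hS.trans <| (dotProduct_mulVec_le_norm_toEuclideanCLM M w).trans <| by gcongr
  rcases (norm_nonneg (S x)).eq_or_lt with h | h
  · rw [← h]; positivity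
  · rw [sq, mul_left_comm] at hSx
    exact le_of_mul_le_mul_left hSx h
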